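/- arXiv:2505.00922 — 6 statements merged into one kernel-verified Lean document; each statement's English description precedes it below -/
import Mathlib

section
/- Let G be a graph and let X be a maximum clique of G. If Y = (Y_1, ..., Y_m) is a clique partition of G, then the number of edges of Y that are lost by removing X, i.e. Σ_i (|X ∩ Y_i|·(|Y_i| - |X ∩ Y_i|) + C(|X ∩ Y_i|, 2)), is at most |X|·(|X|-1). -/
/-- If X is a maximum clique of G and Y is a clique partition of G, then the number of
edges of Y lost by removing X is at most |X|(|X|-1). -/
theorem edges_lost_by_removing_max_clique {V : Type*} [Fintype V] [DecidableEq V]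
    (G : SimpleGraph V) (X : Finset V) (hX : G.IsClique ↑X)
    (hmax : ∀ Z : Finset V, G.IsClique ↑Z → Z.card ≤ X.card)
    (Y : Finpartition (Finset.univ : Finset V))
    (hY : ∀ p ∈ Y.parts, G.IsClique ↑p) :
    ∑ p ∈ Y.parts, ((X ∩ p).card * (p.card - (X ∩ p).card) + (X ∩ p).card.choose 2)
      ≤ X.card * (X.card - 1) := by
  classical
  have hsum : ∑ p ∈ Y.parts, (X ∩ p).card = X.card := by
    rw [← Finset.card_biUnion]
    · congr 1
      ext v
      simp only [Finset.mem_biUnion, Finset.mem_inter]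
      constructor
      · rintro ⟨p, _, hv, _⟩; exact hv
      · intro hv
        obtain ⟨p, hp, hvp⟩ := Y.exists_mem (Finset.mem_univ v)
        exact ⟨p, hp, hv, hvp⟩
    · intro p hp q hq hpq
      exact (Y.disjoint hp hq hpq).mono Finset.inter_subset_right Finset.inter_subset_right
  calc ∑ p ∈ Y.parts, ((X ∩ p).card * (p.card - (X ∩ p).card) + (X ∩ p).card.choose 2)
      ≤ ∑ p ∈ Y.parts, (X ∩ p).card * (X.card - 1) := by
        apply Finset.sum_le_sum
        intro p hp
        have hb : p.card ≤ X.card := hmax p (hY p hp)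
        have ha : (X ∩ p).card ≤ p.card := Finset.card_le_card Finset.inter_subset_right
        have hch : (X ∩ p).card.choose 2 ≤ (X ∩ p).card * ((X ∩ p).card - 1) := by
          rw [Nat.choose_two_right]
          exact Nat.div_le_self _ _
        set a := (X ∩ p).card with hadef
        rcases Nat.eq_zero_or_pos a with h | h
        · simp [h]
        · calc a * (p.card - a) + a.choose 2
              ≤ a * (p.card - a) + a * (a - 1) := Nat.add_le_add_left hch _
            _ = a * ((p.card - a) + (a - 1)) := by ring
            _ ≤ a * (X.card - 1) := Nat.mul_le_mul_left _ (by omega)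
    _ = X.card * (X.card - 1) := by rw [← Finset.sum_mul, hsum]
end

section
/- For every graph G, the greedy algorithm that repeatedly removes a maximum clique and adds it to the partition returns a clique partition X such that OPT ≤ 2·|E(X)|, where OPT is the maximum number of edges contained in the parts of any clique partition of G. -/
/-- `GreedyFrom G R L` says that the list of cliques `L` is a possible run of the greedy
algorithm on the vertex set `R`: at each step a maximum clique of the remaining graph is
removed and added to the partition, until no vertices remain. -/
def GreedyFrom {V : Type*} [DecidableEq V] (G : SimpleGraph V) :
    Finset V → List (Finset V) → Prop
  | R, [] => R = ∅
  | R, X :: L => X ⊆ R ∧ G.IsClique ↑X ∧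
      (∀ Y ⊆ R, G.IsClique ↑Y → Y.card ≤ X.card) ∧ GreedyFrom G (R \ X) L

private lemma choose_succ_two' (n : ℕ) : (n + 1).choose 2 = n.choose 2 + n := by
  rw [Nat.choose_succ_succ]
  simp [Nat.choose_one_right, Nat.add_comm]

private lemma two_mul_choose_two' (n : ℕ) : 2 * n.choose 2 = n * (n - 1) := by
  induction n with
  | zero => simp
  | succ n ih =>
    rw [choose_succ_two', Nat.mul_add, ih, Nat.succ_sub_one]
    cases n with
    | zero => simp
    | succ m => rw [Nat.succ_sub_one]; ring

private lemma choose_two_add' (a b : ℕ) :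
    (a + b).choose 2 = a.choose 2 + a * b + b.choose 2 := by
  induction b with
  | zero => simp
  | succ b ih =>
    rw [← Nat.add_assoc, choose_succ_two', ih, choose_succ_two', Nat.mul_succ]
    omega

private lemma step_bound' (a b s : ℕ) (h : a + b ≤ s) :
    a.choose 2 + a * b ≤ a * (s - 1) := by
  cases a with
  | zero => simp
  | succ a =>
    cases s with
    | zero => omega
    | succ t =>
      simp only [Nat.succ_sub_one]
      have h2 : 2 * ((a + 1).choose 2) = (a + 1) * a := by
        rw [two_mul_choose_two']; simp
      have hb : a + 2 * b ≤ 2 * t := by omega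
      have key : 2 * ((a + 1).choose 2 + (a + 1) * b) ≤ 2 * ((a + 1) * t) := by
        calc 2 * ((a + 1).choose 2 + (a + 1) * b)
            = (a + 1) * (a + 2 * b) := by rw [Nat.mul_add, h2]; ring
          _ ≤ (a + 1) * (2 * t) := Nat.mul_le_mul_left _ hb
          _ = 2 * ((a + 1) * t) := by ring
      omega

private lemma sum_inter_card' {V : Type*} [Fintype V] [DecidableEq V]
    (P : Finpartition (Finset.univ : Finset V)) (X : Finset V) :
    ∑ p ∈ P.parts, (p ∩ X).card = X.card := by
  classical
  have h1 : ∀ p : Finset V, (p ∩ X).card = (X.filter (· ∈ p)).card := by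
    intro p; congr 1; ext x; simp [and_comm]
  simp_rw [h1, Finset.card_filter]
  rw [Finset.sum_comm]
  have h2 : ∀ x ∈ X, (∑ p ∈ P.parts, if x ∈ p then (1 : ℕ) else 0) = 1 := by
    intro x _
    rw [← Finset.card_filter]
    obtain ⟨t, ht, hxt⟩ := P.exists_mem (Finset.mem_univ x)
    rw [Finset.card_eq_one]
    refine ⟨t, ?_⟩
    rw [Finset.eq_singleton_iff_unique_mem]
    refine ⟨Finset.mem_filter.mpr ⟨ht, hxt⟩, fun u hu => ?_⟩
    obtain ⟨hu1, hu2⟩ := Finset.mem_filter.mp hu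
    exact P.eq_of_mem_parts hu1 ht hu2 hxt
  rw [Finset.sum_congr rfl h2]
  simp

private lemma greedy_key' {V : Type*} [Fintype V] [DecidableEq V] (G : SimpleGraph V)
    (P : Finpartition (Finset.univ : Finset V)) (hP : ∀ p ∈ P.parts, G.IsClique ↑p) :
    ∀ (L : List (Finset V)) (R : Finset V), GreedyFrom G R L →
      ∑ p ∈ P.parts, (p ∩ R).card.choose 2 ≤ 2 * (L.map fun X => X.card.choose 2).sum
  | [], R, h => by
    simp only [GreedyFrom] at h
    subst h
    simp
  | X :: L, R, h => by
    obtain ⟨hXR, hXc, hmax, hrec⟩ := h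
    have IH := greedy_key' G P hP L (R \ X) hrec
    have hsplit : ∀ p : Finset V, (p ∩ R).card = (p ∩ X).card + (p ∩ (R \ X)).card := by
      intro p
      have hu : p ∩ X ∪ p ∩ (R \ X) = p ∩ R := by
        rw [← Finset.inter_union_distrib_left, Finset.union_sdiff_of_subset hXR]
      have hd : Disjoint (p ∩ X) (p ∩ (R \ X)) := by
        rw [Finset.disjoint_left]
        intro x hx1 hx2
        simp only [Finset.mem_inter, Finset.mem_sdiff] at hx1 hx2
        exact hx2.2.2 hx1.2
      rw [← hu, Finset.card_union_of_disjoint hd]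
    have hle : ∀ p ∈ P.parts, (p ∩ R).card ≤ X.card := fun p hp =>
      hmax _ Finset.inter_subset_right
        ((hP p hp).subset (by exact_mod_cast Finset.inter_subset_left))
    calc ∑ p ∈ P.parts, (p ∩ R).card.choose 2
        = ∑ p ∈ P.parts, (((p ∩ X).card.choose 2 + (p ∩ X).card * (p ∩ (R \ X)).card)
            + (p ∩ (R \ X)).card.choose 2) := by
          refine Finset.sum_congr rfl fun p _ => ?_
          rw [hsplit p, choose_two_add']
      _ = (∑ p ∈ P.parts, ((p ∩ X).card.choose 2 + (p ∩ X).card * (p ∩ (R \ X)).card))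
            + ∑ p ∈ P.parts, (p ∩ (R \ X)).card.choose 2 := Finset.sum_add_distrib
      _ ≤ (∑ p ∈ P.parts, (p ∩ X).card * (X.card - 1))
            + 2 * (L.map fun Y => Y.card.choose 2).sum := by
          refine Nat.add_le_add (Finset.sum_le_sum fun p hp => ?_) IH
          exact step_bound' _ _ _ (by rw [← hsplit p]; exact hle p hp)
      _ = X.card * (X.card - 1) + 2 * (L.map fun Y => Y.card.choose 2).sum := by
          rw [← Finset.sum_mul, sum_inter_card']
      _ = 2 * ((X :: L).map fun Y => Y.card.choose 2).sum := by
          rw [← two_mul_choose_two']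
          simp [Nat.mul_add]

/-- Greedy is a 2-approximation for Clique Partition: for every clique partition P of G,
the number of edges inside the parts of P is at most twice the number of edges inside the
cliques chosen by greedy. -/
theorem greedy_two_approx_cliquePartition {V : Type*} [Fintype V] [DecidableEq V]
    (G : SimpleGraph V) (L : List (Finset V)) (hL : GreedyFrom G Finset.univ L)
    (P : Finpartition (Finset.univ : Finset V)) (hP : ∀ p ∈ P.parts, G.IsClique ↑p) :
    ∑ p ∈ P.parts, p.card.choose 2 ≤ 2 * (L.map fun X => X.card.choose 2).sum := by
  have := greedy_key' G P hP L Finset.univ hL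
  simpa using this
end

section
/- For every graph G, the greedy algorithm that repeatedly removes a maximum clique returns a clique partition X such that the number of edges of G not contained inside the parts of X is at most 2·OPT, where OPT is the minimum number of edges whose deletion makes G a disjoint union of complete graphs. -/
/-!
Let `H = G - D`, a disjoint union of cliques, and let `X` be the maximum clique that the greedy
algorithm removes from the remaining vertex set `R`. For `x ∈ X`, the cluster of `x` inside `R`
is a clique of `G`, so it has at most `|X|` vertices: the `H`-neighbours of `x` in `R \ X` are at
most as many as the vertices of `X` outside the cluster of `x`, each joined to `x` by an edge of
`D` inside `X`. Summing over `x`, the edges between `X` and `R \ X` that survive in `H` are at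
most twice the `D`-edges inside `X`, so the edges of `G[R]` cut by `X` are at most twice the
`D`-edges meeting `X`; these `D`-edges are disjoint for the successive greedy cliques.
-/

open Finset

def IsClusterGraph {V : Type*} (H : SimpleGraph V) : Prop :=
  ∀ ⦃u v w⦄, H.Adj u v → H.Adj v w → u ≠ w → H.Adj u w

lemma card_filter_product_eq_sum {α β : Type*} (s : Finset α) (t : Finset β) (p : α × β → Prop)
    [DecidablePred p] : #{q ∈ s ×ˢ t | p q} = ∑ x ∈ s, #{y ∈ t | p (x, y)} := by
  simp only [card_filter, sum_product]

section

variable {V : Type*} [DecidableEq V]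

lemma card_le_two_mul_card_image_sym2Mk (P : Finset (V × V)) :
    #P ≤ 2 * #(P.image Sym2.mk.uncurry) := by
  refine card_le_mul_card_image _ 2 fun e _ => ?_
  induction e using Sym2.ind with
  | _ a b =>
    calc #{p ∈ P | Sym2.mk.uncurry p = s(a, b)} ≤ #{(a, b), (b, a)} :=
          card_le_card fun p hp => by
            obtain ⟨c, d⟩ := p
            simp only [mem_filter, Function.uncurry_apply_pair, Sym2.eq_iff] at hp
            simp only [mem_insert, mem_singleton, Prod.mk.injEq]
            tauto
      _ ≤ 2 := card_le_two

lemma card_edgeFinset_inter_sym2_le_choose_two (G : SimpleGraph V) [Fintype G.edgeSet]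
    (X : Finset V) : #(G.edgeFinset ∩ X.sym2) ≤ (#X).choose 2 := by
  rw [← Sym2.card_image_offDiag]
  refine card_le_card fun e he => ?_
  induction e using Sym2.ind with
  | _ a b =>
    simp only [mem_inter, SimpleGraph.mem_edgeFinset, SimpleGraph.mem_edgeSet,
      mk_mem_sym2_iff] at he
    exact mem_image.2 ⟨(a, b), mem_offDiag.2 ⟨he.2.1, he.2.2, he.1.ne⟩, rfl⟩

lemma card_inter_sym2_eq_add_add (S : Finset (Sym2 V)) {X R : Finset V} (hXR : X ⊆ R) :
    #(S ∩ R.sym2) =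
      #(S ∩ X.sym2) + #(S ∩ (R \ X).sym2) + #{p ∈ X ×ˢ (R \ X) | s(p.1, p.2) ∈ S} := by
  set C := {p ∈ X ×ˢ (R \ X) | s(p.1, p.2) ∈ S}
  have hinj : Set.InjOn Sym2.mk.uncurry (C : Set (V × V)) := by
    rintro ⟨a, b⟩ hab ⟨c, d⟩ hcd h
    simp only [C, coe_filter, mem_product, mem_sdiff, Set.mem_ofPred_eq,
      Function.uncurry_apply_pair, Sym2.eq_iff] at hab hcd h
    aesop
  have hsplit : S ∩ R.sym2 = (S ∩ X.sym2 ∪ S ∩ (R \ X).sym2) ∪ C.image Sym2.mk.uncurry := by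
    ext e
    induction e using Sym2.ind with
    | _ a b =>
      simp only [C, mem_union, mem_inter, mk_mem_sym2_iff, mem_image, mem_filter, mem_product,
        mem_sdiff, Prod.exists, Function.uncurry_apply_pair, Sym2.eq_iff]
      grind
  have hdisj₁ : Disjoint (S ∩ X.sym2) (S ∩ (R \ X).sym2) := by
    refine disjoint_left.2 fun e he he' => ?_
    induction e using Sym2.ind with
    | _ a b => simp_all
  have hdisj₂ : Disjoint (S ∩ X.sym2 ∪ S ∩ (R \ X).sym2) (C.image Sym2.mk.uncurry) := by
    refine disjoint_left.2 fun e he he' => ?_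
    induction e using Sym2.ind with
    | _ a b =>
      simp only [C, mem_union, mem_inter, mk_mem_sym2_iff, mem_image, mem_filter, mem_product,
        mem_sdiff, Prod.exists, Function.uncurry_apply_pair, Sym2.eq_iff] at he he'
      grind
  rw [hsplit, card_union_of_disjoint hdisj₂, card_union_of_disjoint hdisj₁,
    card_image_of_injOn hinj]

namespace IsClusterGraph

variable {G H : SimpleGraph V} [DecidableRel H.Adj] {R X : Finset V} {x : V}

lemma isClique_insert_filter_adj (hH : IsClusterGraph H) (R : Finset V) (x : V) :
    H.IsClique ↑(insert x {y ∈ R | H.Adj x y}) := by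
  intro u hu v hv huv
  simp only [coe_insert, coe_filter, Set.mem_insert_iff] at hu hv
  rcases hu with rfl | ⟨-, hu⟩ <;> rcases hv with rfl | ⟨-, hv⟩
  · exact absurd rfl huv
  · exact hv
  · exact hu.symm
  · exact hH hu.symm hv huv

lemma card_filter_adj_sdiff_le (hH : IsClusterGraph H) (hHG : H ≤ G) (hXR : X ⊆ R)
    (hmax : ∀ Y ⊆ R, G.IsClique ↑Y → #Y ≤ #X) (hx : x ∈ X) :
    #{y ∈ R \ X | H.Adj x y} ≤ #{y ∈ X | y ≠ x ∧ ¬H.Adj x y} := by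
  set K := insert x {y ∈ R | H.Adj x y}
  have hK : #K ≤ #X :=
    hmax K (insert_subset (hXR hx) (filter_subset _ _))
      ((hH.isClique_insert_filter_adj R x).mono hHG)
  have hKX : K \ X = {y ∈ R \ X | H.Adj x y} := by
    ext y; simp only [K, mem_sdiff, mem_insert, mem_filter]; grind
  have hXK : X \ K = {y ∈ X | y ≠ x ∧ ¬H.Adj x y} := by
    ext y; simp only [K, mem_sdiff, mem_insert, mem_filter]; grind
  rw [← hKX, ← hXK]
  exact card_sdiff_le_card_sdiff_iff.2 hK

lemma card_crossing_adj_le (hH : IsClusterGraph H) (hHG : H ≤ G) (hXR : X ⊆ R)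
    (hmax : ∀ Y ⊆ R, G.IsClique ↑Y → #Y ≤ #X) :
    #{p ∈ X ×ˢ (R \ X) | H.Adj p.1 p.2} ≤ #{p ∈ X ×ˢ X | p.2 ≠ p.1 ∧ ¬H.Adj p.1 p.2} :=
  calc #{p ∈ X ×ˢ (R \ X) | H.Adj p.1 p.2} = ∑ x ∈ X, #{y ∈ R \ X | H.Adj x y} :=
        card_filter_product_eq_sum _ _ fun p => H.Adj p.1 p.2
    _ ≤ ∑ x ∈ X, #{y ∈ X | y ≠ x ∧ ¬H.Adj x y} :=
        sum_le_sum fun _ hx => hH.card_filter_adj_sdiff_le hHG hXR hmax hx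
    _ = _ := (card_filter_product_eq_sum _ _ fun p => p.2 ≠ p.1 ∧ ¬H.Adj p.1 p.2).symm

end IsClusterGraph

lemma card_crossing_edges_le {G : SimpleGraph V} [Fintype G.edgeSet] {D : Finset (Sym2 V)} {R X : Finset V}
    (hH : IsClusterGraph (G.deleteEdges ↑D)) (hXR : X ⊆ R) (hX : G.IsClique ↑X)
    (hmax : ∀ Y ⊆ R, G.IsClique ↑Y → #Y ≤ #X) :
    #{p ∈ X ×ˢ (R \ X) | s(p.1, p.2) ∈ G.edgeFinset} ≤
      #{p ∈ X ×ˢ (R \ X) | s(p.1, p.2) ∈ D} + 2 * #(D ∩ X.sym2) := by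
  classical
  set H := G.deleteEdges ↑D
  set P := {p ∈ X ×ˢ X | p.2 ≠ p.1 ∧ ¬H.Adj p.1 p.2}
  have hsplit : {p ∈ X ×ˢ (R \ X) | s(p.1, p.2) ∈ G.edgeFinset} ⊆
      {p ∈ X ×ˢ (R \ X) | s(p.1, p.2) ∈ D} ∪ {p ∈ X ×ˢ (R \ X) | H.Adj p.1 p.2} := by
    intro p
    simp only [mem_filter, mem_union, SimpleGraph.mem_edgeFinset, SimpleGraph.mem_edgeSet, H,
      SimpleGraph.deleteEdges_adj, mem_coe]
    tauto
  have hPD : P.image Sym2.mk.uncurry ⊆ D ∩ X.sym2 := by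
    simp only [P, subset_iff, mem_image, mem_filter, mem_product, Prod.exists,
      Function.uncurry_apply_pair, mem_inter, forall_exists_index, and_imp]
    rintro _ a b ha hb hba hnadj rfl
    refine ⟨?_, mk_mem_sym2_iff.2 ⟨ha, hb⟩⟩
    simpa [H, hX ha hb hba.symm] using hnadj
  calc #{p ∈ X ×ˢ (R \ X) | s(p.1, p.2) ∈ G.edgeFinset}
      ≤ #{p ∈ X ×ˢ (R \ X) | s(p.1, p.2) ∈ D} + #{p ∈ X ×ˢ (R \ X) | H.Adj p.1 p.2} :=
        (card_le_card hsplit).trans (card_union_le _ _)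
    _ ≤ #{p ∈ X ×ˢ (R \ X) | s(p.1, p.2) ∈ D} + #P :=
        Nat.add_le_add_left (hH.card_crossing_adj_le (G.deleteEdges_le _) hXR hmax) _
    _ ≤ #{p ∈ X ×ˢ (R \ X) | s(p.1, p.2) ∈ D} + 2 * #(D ∩ X.sym2) :=
        Nat.add_le_add_left ((card_le_two_mul_card_image_sym2Mk P).trans
          (Nat.mul_le_mul_left 2 (card_le_card hPD))) _

lemma GreedyFrom.card_edgeFinset_inter_sym2_le {G : SimpleGraph V} [Fintype G.edgeSet]
    {D : Finset (Sym2 V)} (hH : IsClusterGraph (G.deleteEdges ↑D)) :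
    ∀ {R : Finset V} {L : List (Finset V)}, GreedyFrom G R L →
      #(G.edgeFinset ∩ R.sym2) ≤ (L.map fun X => (#X).choose 2).sum + 2 * #(D ∩ R.sym2)
  | _, [], rfl => by simp
  | _, X :: _, ⟨hXR, hX, hmax, hrest⟩ => by
    have ih := GreedyFrom.card_edgeFinset_inter_sym2_le hH hrest
    have hE := card_inter_sym2_eq_add_add G.edgeFinset hXR
    have hD := card_inter_sym2_eq_add_add D hXR
    have hXE := card_edgeFinset_inter_sym2_le_choose_two G X
    have hcross := card_crossing_edges_le hH hXR hX hmax
    rw [List.map_cons, List.sum_cons]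
    omega

end

theorem greedy_two_approx_clusterDeletion_general {V : Type*} [Fintype V] [DecidableEq V]
    (G : SimpleGraph V) [DecidableRel G.Adj]
    (L : List (Finset V)) (hL : GreedyFrom G Finset.univ L)
    (D : Finset (Sym2 V))
    (hcluster : ∀ u v w : V, (G.deleteEdges ↑D).Adj u v → (G.deleteEdges ↑D).Adj v w →
      u ≠ w → (G.deleteEdges ↑D).Adj u w) :
    G.edgeFinset.card - (L.map fun X => X.card.choose 2).sum ≤ 2 * D.card := by
  have h := hL.card_edgeFinset_inter_sym2_le fun u v w => hcluster u v w
  rw [sym2_univ, inter_univ, inter_univ] at h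
  omega

/-- Greedy is a 2-approximation for Cluster Deletion: the number of edges of G not inside
the greedy cliques is at most twice the size of any edge set D whose deletion turns G into
a disjoint union of complete graphs. -/
theorem greedy_two_approx_clusterDeletion {V : Type*} [Fintype V] [DecidableEq V]
    (G : SimpleGraph V) [DecidableRel G.Adj]
    (L : List (Finset V)) (hL : GreedyFrom G Finset.univ L)
    (D : Finset (Sym2 V)) (hD : ↑D ⊆ G.edgeSet)
    (hcluster : ∀ u v w : V, (G.deleteEdges ↑D).Adj u v → (G.deleteEdges ↑D).Adj v w →
      u ≠ w → (G.deleteEdges ↑D).Adj u w) :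
    G.edgeFinset.card - (L.map fun X => X.card.choose 2).sum ≤ 2 * D.card :=
  greedy_two_approx_clusterDeletion_general G L hL D hcluster
end

section
/- Let G be a graph, Y a clique partition of G, k a positive integer, and let λ(k) be the minimum of |E(Y − X)| over all vertex sets X of size k, where Y − X is the clique partition of G − X obtained by deleting X from each part. If C ⊆ V(G) has |C| = k and |E(Y − C)| = λ(k), then there exists an ordering c_1, ..., c_k of C such that for every i ∈ [k], the vertex c_i lies in a part of maximum size of the partition Y − {c_1, ..., c_{i-1}}. -/
open Finset

/-- Exchange argument: if `C` minimizes the surviving edge count, then for any `S ⊆ C`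
with `C \ S` nonempty, some element of `C \ S` lies in a maximum size part of `Y − S`. -/
lemma key_exchange {V : Type*} [Fintype V] [DecidableEq V]
    (Y : Finpartition (Finset.univ : Finset V)) (C : Finset V)
    (hmin : ∀ X : Finset V, X.card = C.card →
      ∑ p ∈ Y.parts, (p \ C).card.choose 2 ≤ ∑ p ∈ Y.parts, (p \ X).card.choose 2)
    (S : Finset V) (hS : S ⊆ C) (hne : (C \ S).Nonempty) :
    ∃ c ∈ C \ S, ∃ p ∈ Y.parts, c ∈ p ∧
      ∀ q ∈ Y.parts, (q \ S).card ≤ (p \ S).card := by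
  by_contra hcon
  push_neg at hcon
  obtain ⟨c, hc⟩ := hne
  have hcC : c ∈ C := (mem_sdiff.mp hc).1
  have hcS : c ∉ S := (mem_sdiff.mp hc).2
  obtain ⟨qc, hqc, hcq⟩ := Y.exists_mem (mem_univ c)
  obtain ⟨p, hp, hpmax⟩ := Finset.exists_max_image Y.parts (fun r => (r \ S).card) ⟨qc, hqc⟩
  -- no element of C \ S lies in p
  have hpCS : ∀ x ∈ p, x ∉ C \ S := by
    intro x hx hxCS
    obtain ⟨q', hq', hlt⟩ := hcon x hxCS p hp hx
    exact absurd (hpmax q' hq') (not_le.mpr hlt)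
  have hcp : c ∉ p := fun h => hpCS c h hc
  have hpq : p ≠ qc := fun e => hcp (e ▸ hcq)
  have hpSC : p \ S = p \ C := by
    ext x
    simp only [mem_sdiff]
    constructor
    · rintro ⟨hxp, hxS⟩
      refine ⟨hxp, fun hxC => ?_⟩
      exact hpCS x hxp (mem_sdiff.mpr ⟨hxC, hxS⟩)
    · rintro ⟨hxp, hxC⟩
      exact ⟨hxp, fun hxS => hxC (hS hxS)⟩
  -- qc's count is strictly below the maximum
  have hqlt : (qc \ S).card < (p \ S).card := by
    obtain ⟨q', hq', hlt⟩ := hcon c hc qc hqc hcq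
    exact lt_of_lt_of_le hlt (hpmax q' hq')
  have hcqS : c ∈ qc \ S := mem_sdiff.mpr ⟨hcq, hcS⟩
  have hq1 : 1 ≤ (qc \ S).card := card_pos.mpr ⟨c, hcqS⟩
  have hp2 : 2 ≤ (p \ S).card := by omega
  obtain ⟨v, hv⟩ : (p \ S).Nonempty := card_pos.mp (by omega)
  have hvp : v ∈ p := (mem_sdiff.mp hv).1
  have hvC : v ∉ C := (mem_sdiff.mp (hpSC ▸ hv)).2
  have hvq : v ∉ qc := fun h => hpq (Y.eq_of_mem_parts hp hqc hvp h)
  set C' : Finset V := insert v (C.erase c) with hC'def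
  have hC'card : C'.card = C.card := by
    rw [hC'def, card_insert_of_notMem (fun h => hvC (mem_of_mem_erase h)),
      card_erase_of_mem hcC]
    have : 1 ≤ C.card := card_pos.mpr ⟨c, hcC⟩
    omega
  have hmin' := hmin C' hC'card
  -- compute the three kinds of parts
  have hfix : ∀ r ∈ Y.parts, r ≠ p → r ≠ qc → r \ C' = r \ C := by
    intro r hr hrp hrq
    ext x
    simp only [hC'def, mem_sdiff, mem_insert, mem_erase]
    constructor
    · rintro ⟨hxr, hx⟩
      push_neg at hx
      refine ⟨hxr, fun hxC => ?_⟩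
      rcases eq_or_ne x c with rfl | hxc
      · exact hrq (Y.eq_of_mem_parts hr hqc hxr hcq)
      · exact (hx.2 hxc) hxC
    · rintro ⟨hxr, hxC⟩
      refine ⟨hxr, ?_⟩
      push_neg
      refine ⟨fun h => hrp (Y.eq_of_mem_parts hr hp (h ▸ hxr) hvp), fun _ => hxC⟩
  have hpC' : p \ C' = (p \ C).erase v := by
    ext x
    simp only [hC'def, mem_sdiff, mem_insert, mem_erase]
    constructor
    · rintro ⟨hxp, hx⟩
      push_neg at hx
      rcases eq_or_ne x c with rfl | hxc
      · exact absurd hxp hcp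
      · exact ⟨hx.1, hxp, hx.2 hxc⟩
    · rintro ⟨hxv, hxp, hxC⟩
      refine ⟨hxp, ?_⟩
      push_neg
      exact ⟨hxv, fun _ => hxC⟩
  have hqC' : qc \ C' = insert c (qc \ C) := by
    ext x
    simp only [hC'def, mem_sdiff, mem_insert, mem_erase]
    constructor
    · rintro ⟨hxq, hx⟩
      push_neg at hx
      rcases eq_or_ne x c with rfl | hxc
      · exact Or.inl rfl
      · exact Or.inr ⟨hxq, hx.2 hxc⟩
    · rintro (rfl | ⟨hxq, hxC⟩)
      · exact ⟨hcq, fun h => h.elim (fun hv' => hvq (hv' ▸ hcq)) (fun h' => h'.1 rfl)⟩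
      · exact ⟨hxq, fun h => h.elim (fun hv' => hvq (hv' ▸ hxq)) (fun h' => hxC h'.2)⟩
  have hvpc : v ∈ p \ C := hpSC ▸ hv
  have hcqc : c ∉ qc \ C := fun h => (mem_sdiff.mp h).2 hcC
  have hpC'card : (p \ C').card = (p \ C).card - 1 := by rw [hpC', card_erase_of_mem hvpc]
  have hqC'card : (qc \ C').card = (qc \ C).card + 1 := by
    rw [hqC', card_insert_of_notMem hcqc]
  have ha2 : 2 ≤ (p \ C).card := by rw [← hpSC]; exact hp2
  have hbS : (qc \ C).card + 1 ≤ (qc \ S).card := by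
    have hsub : insert c (qc \ C) ⊆ qc \ S := by
      intro x hx
      rcases mem_insert.mp hx with rfl | hx
      · exact hcqS
      · exact mem_sdiff.mpr ⟨(mem_sdiff.mp hx).1, fun h => (mem_sdiff.mp hx).2 (hS h)⟩
    calc (qc \ C).card + 1 = (insert c (qc \ C)).card := (card_insert_of_notMem hcqc).symm
      _ ≤ (qc \ S).card := card_le_card hsub
  -- split the two sums
  have hqcp : qc ∈ Y.parts.erase p := mem_erase.mpr ⟨hpq.symm, hqc⟩
  have split : ∀ f : Finset V → ℕ, ∑ r ∈ Y.parts, f r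
      = f p + (f qc + ∑ r ∈ (Y.parts.erase p).erase qc, f r) := by
    intro f
    rw [← Finset.add_sum_erase _ f hp, ← Finset.add_sum_erase _ f hqcp]
  rw [split (fun r => (r \ C).card.choose 2), split (fun r => (r \ C').card.choose 2)] at hmin'
  have htail : ∑ r ∈ (Y.parts.erase p).erase qc, (r \ C').card.choose 2
      = ∑ r ∈ (Y.parts.erase p).erase qc, (r \ C).card.choose 2 := by
    refine Finset.sum_congr rfl fun r hr => ?_
    have hr1 := mem_erase.mp hr
    have hr2 := mem_erase.mp hr1.2
    rw [hfix r hr2.2 hr2.1 hr1.1]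
  rw [htail, hpC'card, hqC'card, ← add_assoc, ← add_assoc] at hmin'
  have h' : (p \ C).card.choose 2 + (qc \ C).card.choose 2
      ≤ ((p \ C).card - 1).choose 2 + ((qc \ C).card + 1).choose 2 :=
    le_of_add_le_add_right hmin'
  obtain ⟨m, hm⟩ : ∃ m, (p \ C).card = m + 2 := ⟨(p \ C).card - 2, by omega⟩
  rw [hm] at h'
  have hma : m + 2 - 1 = m + 1 := rfl
  have h1 : (m + 2).choose 2 = (m + 1).choose 2 + (m + 1) := by
    rw [Nat.choose_succ_succ (m + 1) 1, Nat.choose_one_right]; ring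
  have h2 : ((qc \ C).card + 1).choose 2 = (qc \ C).card.choose 2 + (qc \ C).card := by
    rw [Nat.choose_succ_succ (qc \ C).card 1, Nat.choose_one_right]; ring
  rw [hma, h1, h2] at h'
  -- hence m + 1 ≤ b, but b + 1 < m + 2
  have hblt : (qc \ C).card + 1 < m + 2 := by
    calc (qc \ C).card + 1 ≤ (qc \ S).card := hbS
      _ < (p \ S).card := hqlt
      _ = m + 2 := by rw [hpSC, hm]
  omega

/-- Build the ordering by repeatedly applying the exchange lemma. -/
lemma build_order {V : Type*} [Fintype V] [DecidableEq V]
    (Y : Finpartition (Finset.univ : Finset V)) (C : Finset V)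
    (hmin : ∀ X : Finset V, X.card = C.card →
      ∑ p ∈ Y.parts, (p \ C).card.choose 2 ≤ ∑ p ∈ Y.parts, (p \ X).card.choose 2) :
    ∀ (n : ℕ) (S : Finset V), S ⊆ C → (C \ S).card = n →
    ∃ l : List V, l.Nodup ∧ l.toFinset = C \ S ∧ l.length = n ∧
      ∀ (i : ℕ) (hi : i < l.length), ∃ p ∈ Y.parts,
        l.get ⟨i, hi⟩ ∈ p \ (S ∪ (l.take i).toFinset) ∧
        ∀ q ∈ Y.parts, (q \ (S ∪ (l.take i).toFinset)).card
          ≤ (p \ (S ∪ (l.take i).toFinset)).card := by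
  intro n
  induction n with
  | zero =>
    intro S hS h0
    refine ⟨[], List.nodup_nil, ?_, rfl, fun i hi => absurd hi (by simp)⟩
    simp [(card_eq_zero.mp h0).symm]
  | succ n ih =>
    intro S hS hcard
    have hne : (C \ S).Nonempty := card_pos.mp (by omega)
    obtain ⟨c, hc, p, hp, hcp, hmax⟩ := key_exchange Y C hmin S hS hne
    have hcC : c ∈ C := (mem_sdiff.mp hc).1
    have hcS : c ∉ S := (mem_sdiff.mp hc).2
    have hS' : insert c S ⊆ C := insert_subset hcC hS
    have hsd : C \ insert c S = (C \ S).erase c := by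
      ext x; simp only [mem_sdiff, mem_insert, mem_erase]; tauto
    have hcard' : (C \ insert c S).card = n := by
      rw [hsd, card_erase_of_mem hc, hcard]
      omega
    obtain ⟨l, hnd, htf, hlen, hprop⟩ := ih (insert c S) hS' hcard'
    have hcl : c ∉ l := by
      intro h
      have : c ∈ C \ insert c S := htf ▸ List.mem_toFinset.mpr h
      simp at this
    refine ⟨c :: l, List.nodup_cons.mpr ⟨hcl, hnd⟩, ?_, by simp [hlen], ?_⟩
    · rw [List.toFinset_cons, htf]
      ext x
      simp only [mem_insert, mem_sdiff, mem_insert]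
      constructor
      · rintro (rfl | ⟨hx, hx2⟩)
        · exact ⟨hcC, hcS⟩
        · exact ⟨hx, fun h => hx2 (Or.inr h)⟩
      · rintro ⟨hx, hx2⟩
        rcases eq_or_ne x c with rfl | hxc
        · exact Or.inl rfl
        · exact Or.inr ⟨hx, by tauto⟩
    · intro i hi
      match i, hi with
      | 0, hi =>
        refine ⟨p, hp, ?_, ?_⟩
        · simpa using mem_sdiff.mpr ⟨hcp, hcS⟩
        · intro q hq
          simpa using hmax q hq
      | (j+1), hi =>
        have hj : j < l.length := by simpa using hi
        obtain ⟨p', hp', hmem', hmax'⟩ := hprop j hj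
        have hset : S ∪ ((c :: l).take (j+1)).toFinset
            = insert c S ∪ (l.take j).toFinset := by
          simp only [List.take_succ_cons, List.toFinset_cons]
          ext x
          simp only [mem_union, mem_insert]
          tauto
        refine ⟨p', hp', ?_, ?_⟩
        · rw [hset]
          simpa using hmem'
        · intro q hq
          rw [hset]
          exact hmax' q hq

/-- If C is a k-set minimizing the number of edges of the clique partition Y surviving
after deletion, then C can be ordered c_1, ..., c_k so that each c_i lies in a maximum
size part of Y - {c_1, ..., c_{i-1}}. -/
theorem ordering_of_minimizing_set {V : Type*} [Fintype V] [DecidableEq V]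
    (G : SimpleGraph V) (Y : Finpartition (Finset.univ : Finset V))
    (hY : ∀ p ∈ Y.parts, G.IsClique ↑p)
    (k : ℕ) (hk : 1 ≤ k) (C : Finset V) (hCcard : C.card = k)
    (hmin : ∀ X : Finset V, X.card = k →
      ∑ p ∈ Y.parts, (p \ C).card.choose 2 ≤ ∑ p ∈ Y.parts, (p \ X).card.choose 2) :
    ∃ l : List V, l.Nodup ∧ l.toFinset = C ∧ l.length = k ∧
      ∀ (i : ℕ) (hi : i < l.length), ∃ p ∈ Y.parts,
        l.get ⟨i, hi⟩ ∈ p \ (l.take i).toFinset ∧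
        ∀ q ∈ Y.parts, (q \ (l.take i).toFinset).card ≤ (p \ (l.take i).toFinset).card := by
  have hmin' : ∀ X : Finset V, X.card = C.card →
      ∑ p ∈ Y.parts, (p \ C).card.choose 2 ≤ ∑ p ∈ Y.parts, (p \ X).card.choose 2 := by
    intro X hX; exact hmin X (by omega)
  obtain ⟨l, hnd, htf, hlen, hprop⟩ := build_order Y C hmin' k ∅ (empty_subset C)
    (by rw [sdiff_empty, hCcard])
  refine ⟨l, hnd, by rw [htf, sdiff_empty], hlen, fun i hi => ?_⟩
  obtain ⟨p, hp, hmem, hmax⟩ := hprop i hi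
  rw [empty_union] at hmem hmax
  exact ⟨p, hp, hmem, hmax⟩
end

section
/- Let G be a graph, Y a clique partition of G, and suppose C ⊆ V(G) minimizes |E(Y − C)| over all sets of its size. Then C contains a vertex that lies in a maximum-size part of Y. -/
/-- If C minimizes the number of edges of the clique partition Y surviving after deletion,
over all vertex sets of its size, then C contains a vertex lying in a maximum-size part
of Y. -/
theorem minimizing_set_meets_max_part {V : Type*} [Fintype V] [DecidableEq V]
    (G : SimpleGraph V) (Y : Finpartition (Finset.univ : Finset V))
    (hY : ∀ p ∈ Y.parts, G.IsClique ↑p)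
    (C : Finset V) (hC : C.Nonempty)
    (hmin : ∀ X : Finset V, X.card = C.card →
      ∑ p ∈ Y.parts, (p \ C).card.choose 2 ≤ ∑ p ∈ Y.parts, (p \ X).card.choose 2) :
    ∃ c ∈ C, ∃ p ∈ Y.parts, c ∈ p ∧ ∀ q ∈ Y.parts, q.card ≤ p.card := by
  obtain ⟨c, hc⟩ := hC
  obtain ⟨q, hq, hcq⟩ := Y.exists_mem (Finset.mem_univ c)
  have hparts : Y.parts.Nonempty := ⟨q, hq⟩
  obtain ⟨p, hp, hpmax⟩ := Finset.exists_max_image Y.parts Finset.card hparts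
  by_cases hpc : (p ∩ C).Nonempty
  · obtain ⟨c', hc'⟩ := hpc
    rw [Finset.mem_inter] at hc'
    exact ⟨c', hc'.2, p, hp, hc'.1, hpmax⟩
  -- p ∩ C = ∅
  have hpC : ∀ x ∈ p, x ∉ C := by
    intro x hx hxC
    exact hpc ⟨x, Finset.mem_inter.mpr ⟨hx, hxC⟩⟩
  have hpq : p ≠ q := by
    intro h; exact hpC c (h ▸ hcq) hc
  obtain ⟨v, hv⟩ := Y.nonempty_of_mem_parts hp
  have hvC : v ∉ C := hpC v hv
  have hvq : v ∉ q := by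
    intro h
    exact hpq (Y.eq_of_mem_parts hp hq hv h)
  have hcp : c ∉ p := fun h => hpC c h hc
  set X : Finset V := insert v (C.erase c) with hX
  have hvX : v ∉ C.erase c := fun h => hvC (Finset.mem_of_mem_erase h)
  have hXcard : X.card = C.card := by
    rw [hX, Finset.card_insert_of_notMem hvX, Finset.card_erase_of_mem hc]
    have : 1 ≤ C.card := Finset.card_pos.mpr ⟨c, hc⟩
    omega
  have h := hmin X hXcard
  -- split the sums
  have hqmem : q ∈ Y.parts.erase p := Finset.mem_erase.mpr ⟨(Ne.symm hpq), hq⟩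
  have hsplit : ∀ F : Finset V → ℕ, ∑ r ∈ Y.parts, F r
      = F p + (F q + ∑ r ∈ (Y.parts.erase p).erase q, F r) := by
    intro F
    rw [Finset.add_sum_erase _ F hqmem, Finset.add_sum_erase _ F hp]
  rw [hsplit, hsplit] at h
  -- other parts are unchanged
  have hrest : ∑ r ∈ (Y.parts.erase p).erase q, (r \ C).card.choose 2
      = ∑ r ∈ (Y.parts.erase p).erase q, (r \ X).card.choose 2 := by
    apply Finset.sum_congr rfl
    intro r hr
    obtain ⟨hrq, hrp, hrparts⟩ : r ≠ q ∧ r ≠ p ∧ r ∈ Y.parts := by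
      rw [Finset.mem_erase, Finset.mem_erase] at hr
      exact ⟨hr.1, hr.2.1, hr.2.2⟩
    have hvr : v ∉ r := fun hvr => hrp (Y.eq_of_mem_parts hrparts hp hvr hv)
    have hcr : c ∉ r := fun hcr => hrq (Y.eq_of_mem_parts hrparts hq hcr hcq)
    have heq : r \ C = r \ X := by
      ext x
      simp only [Finset.mem_sdiff, hX, Finset.mem_insert, Finset.mem_erase]
      constructor
      · rintro ⟨hxr, hxC⟩
        refine ⟨hxr, ?_⟩
        rintro (rfl | ⟨_, hxC'⟩)
        · exact hvr hxr
        · exact hxC hxC'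
      · rintro ⟨hxr, hxX⟩
        refine ⟨hxr, fun hxC => hxX ?_⟩
        right
        exact ⟨fun h => hcr (h ▸ hxr), hxC⟩
    rw [heq]
  -- compute the p and q terms
  have hpCsd : p \ C = p := by
    ext x; simp only [Finset.mem_sdiff]
    exact ⟨fun h => h.1, fun h => ⟨h, hpC x h⟩⟩
  have hpX : p \ X = p.erase v := by
    ext x
    simp only [Finset.mem_sdiff, hX, Finset.mem_insert, Finset.mem_erase]
    constructor
    · rintro ⟨hxp, hxX⟩
      exact ⟨fun h => hxX (Or.inl h), hxp⟩
    · rintro ⟨hxv, hxp⟩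
      refine ⟨hxp, ?_⟩
      rintro (rfl | hxC)
      · exact hxv rfl
      · exact hpC x hxp hxC.2
  have hqX : q \ X = insert c (q \ C) := by
    ext x
    simp only [Finset.mem_sdiff, hX, Finset.mem_insert, Finset.mem_erase]
    constructor
    · rintro ⟨hxq, hxX⟩
      by_cases hxc : x = c
      · exact Or.inl hxc
      · refine Or.inr ⟨hxq, fun hxC => hxX (Or.inr ⟨hxc, hxC⟩)⟩
    · rintro (rfl | ⟨hxq, hxC⟩)
      · refine ⟨hcq, ?_⟩
        rintro (rfl | ⟨h, _⟩)
        · exact hvq hcq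
        · exact h rfl
      · refine ⟨hxq, ?_⟩
        rintro (rfl | ⟨_, h⟩)
        · exact hvq hxq
        · exact hxC h
  have hcnotin : c ∉ q \ C := fun h => (Finset.mem_sdiff.mp h).2 hc
  have hqXcard : (q \ X).card = (q \ C).card + 1 := by
    rw [hqX, Finset.card_insert_of_notMem hcnotin]
  have hpXcard : (p \ X).card = p.card - 1 := by
    rw [hpX, Finset.card_erase_of_mem hv]
  set n := p.card with hn
  set m := (q \ C).card with hm
  have hn1 : 1 ≤ n := Finset.card_pos.mpr ⟨v, hv⟩
  -- m ≤ q.card - 1 ≤ n - 1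
  have hmq : m + 1 ≤ q.card := by
    have hsub : insert c (q \ C) ⊆ q := by
      intro x hx
      rcases Finset.mem_insert.mp hx with rfl | hx
      · exact hcq
      · exact (Finset.mem_sdiff.mp hx).1
    calc m + 1 = (insert c (q \ C)).card := (Finset.card_insert_of_notMem hcnotin).symm
      _ ≤ q.card := Finset.card_le_card hsub
  have hqn : q.card ≤ n := hpmax q hq
  -- from h : n-1 ≤ m
  rw [hpCsd, hqXcard, hpXcard, ← hrest] at h
  have hkey : n - 1 ≤ m := by
    obtain ⟨k, hk⟩ : ∃ k, n = k + 1 := ⟨n - 1, by omega⟩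
    rw [hn] at hk
    rw [hk] at h
    have h1 : (k + 1).choose 2 = k.choose 2 + k := by
      simp [Nat.choose_succ_succ]; omega
    have h2 : (m + 1).choose 2 = m.choose 2 + m := by
      simp [Nat.choose_succ_succ]; omega
    have hnk : n = k + 1 := by rw [hn, hk]
    rw [hnk] at h
    have h3 : ((k + 1 - 1).choose 2 : ℕ) = k.choose 2 := by norm_num
    rw [h3] at h
    have : n = k + 1 := by rw [hn, hk]
    omega
  have hqcard : q.card = n := by omega
  exact ⟨c, hc, q, hq, hcq, fun r hr => hqcard ▸ hpmax r hr⟩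
end

section
/- For the permutation π = [2,4,6,...,2k, 2k-1, 2k-3, ..., 3, 1] of [2k] (first the even numbers increasing, then the odd numbers decreasing), the permutation graph G_π contains a clique of size k+1, and hence its maximum clique partition contains at least C(k+1,2) edges, while the partition into the k pairs {1,2},{3,4},...,{2k-1,2k} contains only k edges. -/
/-- Position of value `v+1` (0-indexed vertex `v`) in the permutation
[2, 4, ..., 2k, 2k-1, 2k-3, ..., 3, 1] of [2k]: even value 2j is at position j,
odd value 2m-1 is at position 2k-m+1. -/
def permPos (k v : ℕ) : ℕ := if v % 2 = 1 then (v + 1) / 2 else 2 * k - v / 2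

/-- The permutation graph of [2, 4, ..., 2k, 2k-1, ..., 3, 1], with vertices the values
(0-indexed): values u < v are adjacent iff value u+1 occurs after value v+1. -/
def permGraphEvenOdd (k : ℕ) : SimpleGraph (Fin (2 * k)) :=
  SimpleGraph.fromRel fun u v => u < v ∧ permPos k v < permPos k u

lemma permGraph_adj_of (k : ℕ) {u v : Fin (2 * k)} (hne : u.1 ≠ v.1)
    (h : (u.1 % 2 = 0 ∨ u.1 = 2 * k - 1) ∧ (v.1 % 2 = 0 ∨ v.1 = 2 * k - 1)) :
    (permGraphEvenOdd k).Adj u v := by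
  have hu := u.2
  have hv := v.2
  simp only [permGraphEvenOdd, SimpleGraph.fromRel_adj, Fin.lt_def, permPos]
  refine ⟨fun e => hne (congrArg Fin.val e), ?_⟩
  split_ifs <;> omega

/-- The clique of size k+1. -/
noncomputable def bigClique (k : ℕ) (hk : 1 ≤ k) : Finset (Fin (2 * k)) :=
  Finset.univ.image (fun i : Fin (k + 1) =>
    (⟨if i.1 < k then 2 * i.1 else 2 * k - 1, by have := i.2; split_ifs <;> omega⟩ :
      Fin (2 * k)))

lemma mem_bigClique (k : ℕ) (hk : 1 ≤ k) (x : Fin (2 * k)) :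
    x ∈ bigClique k hk ↔ (x.1 % 2 = 0 ∨ x.1 = 2 * k - 1) := by
  constructor
  · intro hx
    obtain ⟨i, -, hi⟩ := Finset.mem_image.1 hx
    have hi' : (if i.1 < k then 2 * i.1 else 2 * k - 1) = x.1 := congrArg Fin.val hi
    split_ifs at hi' <;> omega
  · intro hx
    have hx2 := x.2
    rcases hx with hx | hx
    · refine Finset.mem_image.2 ⟨⟨x.1 / 2, by omega⟩, Finset.mem_univ _, ?_⟩
      apply Fin.ext
      simp only
      split_ifs <;> omega
    · refine Finset.mem_image.2 ⟨⟨k, by omega⟩, Finset.mem_univ _, ?_⟩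
      apply Fin.ext
      simp only
      split_ifs <;> omega

lemma bigClique_isClique (k : ℕ) (hk : 1 ≤ k) :
    (permGraphEvenOdd k).IsClique ↑(bigClique k hk) := by
  intro u hu v hv huv
  rw [Finset.mem_coe, mem_bigClique] at hu hv
  exact permGraph_adj_of k (fun e => huv (Fin.ext e)) ⟨hu, hv⟩

lemma bigClique_card (k : ℕ) (hk : 1 ≤ k) : (bigClique k hk).card = k + 1 := by
  rw [bigClique, Finset.card_image_of_injective _ ?_, Finset.card_univ, Fintype.card_fin]
  intro i j h
  have h' : (if i.1 < k then 2 * i.1 else 2 * k - 1) = (if j.1 < k then 2 * j.1 else 2 * k - 1) :=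
    congrArg Fin.val h
  have hi := i.2
  have hj := j.2
  apply Fin.ext
  split_ifs at h' <;> omega

lemma exists_partition (k : ℕ) (hk : 1 ≤ k) :
    ∃ P : Finpartition (Finset.univ : Finset (Fin (2 * k))),
      (∀ q ∈ P.parts, (permGraphEvenOdd k).IsClique ↑q) ∧
      (k + 1).choose 2 ≤ ∑ q ∈ P.parts, q.card.choose 2 := by
  classical
  let S := bigClique k hk
  let parts : Finset (Finset (Fin (2 * k))) :=
    insert S ((Finset.univ \ S).image fun v => {v})
  have hSparts : S ∈ parts := Finset.mem_insert_self _ _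
  have hSne : S.Nonempty := by
    rw [← Finset.card_pos, bigClique_card k hk]; omega
  have hmem : ∀ q ∈ parts, q = S ∨ ∃ v, v ∉ S ∧ q = {v} := by
    intro q hq
    rw [Finset.mem_insert] at hq
    rcases hq with hq | hq
    · exact Or.inl hq
    · obtain ⟨v, hv, rfl⟩ := Finset.mem_image.1 hq
      exact Or.inr ⟨v, (Finset.mem_sdiff.1 hv).2, rfl⟩
  refine ⟨⟨parts, ?_, ?_, ?_⟩, ?_, ?_⟩
  · rw [Finset.supIndep_iff_pairwiseDisjoint]
    intro q hq r hr hqr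
    simp only [Function.onFun, id_eq]
    rcases hmem q hq with rfl | ⟨v, hv, rfl⟩ <;> rcases hmem r hr with rfl | ⟨w, hw, rfl⟩
    · exact absurd rfl hqr
    · simp only [Finset.disjoint_singleton_right]; exact hw
    · simp only [Finset.disjoint_singleton_left]; exact hv
    · simp only [Finset.disjoint_singleton_right, Finset.mem_singleton]
      exact fun e => hqr (by rw [e])
  · apply Finset.ext
    intro x
    simp only [Finset.mem_sup, Finset.mem_univ, iff_true, id]
    by_cases hx : x ∈ S
    · exact ⟨S, hSparts, hx⟩
    · refine ⟨{x}, ?_, Finset.mem_singleton_self x⟩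
      exact Finset.mem_insert_of_mem (Finset.mem_image.2 ⟨x,
        Finset.mem_sdiff.2 ⟨Finset.mem_univ _, hx⟩, rfl⟩)
  · intro hbot
    rcases hmem _ hbot with h | ⟨v, -, h⟩
    · exact hSne.ne_empty h.symm
    · exact (Finset.singleton_nonempty v).ne_empty h.symm
  · intro q hq
    rcases hmem q hq with rfl | ⟨v, -, rfl⟩
    · exact bigClique_isClique k hk
    · simp [SimpleGraph.isClique_iff, Set.pairwise_singleton]
  · calc (k + 1).choose 2 = S.card.choose 2 := by rw [bigClique_card k hk]
      _ ≤ ∑ q ∈ parts, q.card.choose 2 :=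
        Finset.single_le_sum (f := fun q => q.card.choose 2) (fun q _ => Nat.zero_le _) hSparts

/-- For the permutation [2,4,...,2k, 2k-1,...,3,1], the permutation graph has a clique of
size k+1, hence some clique partition with at least C(k+1,2) edges, while the partition
into consecutive pairs {1,2},{3,4},...,{2k-1,2k} contains only k edges. -/
theorem permGraphEvenOdd_cliques (k : ℕ) (hk : 1 ≤ k) :
    (∃ S : Finset (Fin (2 * k)), (permGraphEvenOdd k).IsClique ↑S ∧ S.card = k + 1) ∧
    (∃ P : Finpartition (Finset.univ : Finset (Fin (2 * k))),
      (∀ q ∈ P.parts, (permGraphEvenOdd k).IsClique ↑q) ∧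
      (k + 1).choose 2 ≤ ∑ q ∈ P.parts, q.card.choose 2) ∧
    (∃ Q : Finpartition (Finset.univ : Finset (Fin (2 * k))),
      Q.parts = Finset.univ.image (fun i : Fin k =>
        ({⟨2 * i.1, by have := i.2; omega⟩, ⟨2 * i.1 + 1, by have := i.2; omega⟩} :
          Finset (Fin (2 * k)))) ∧
      (∀ q ∈ Q.parts, (permGraphEvenOdd k).IsClique ↑q) ∧
      ∑ q ∈ Q.parts, q.card.choose 2 = k) := by
  refine ⟨⟨bigClique k hk, bigClique_isClique k hk, bigClique_card k hk⟩, ?_, ?_⟩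
  · exact exists_partition k hk
  · -- partition into pairs
    have hpair : ∀ i : Fin k, (2 * i.1 < 2 * k) ∧ (2 * i.1 + 1 < 2 * k) := by
      intro i; have := i.2; omega
    set pairFun : Fin k → Finset (Fin (2 * k)) := fun i =>
      {⟨2 * i.1, by have := i.2; omega⟩, ⟨2 * i.1 + 1, by have := i.2; omega⟩} with hpairFun
    have hmemPair : ∀ (i : Fin k) (x : Fin (2 * k)),
        x ∈ pairFun i ↔ (x.1 = 2 * i.1 ∨ x.1 = 2 * i.1 + 1) := by
      intro i x
      simp [hpairFun, Fin.ext_iff]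
    have hinj : Function.Injective pairFun := by
      intro i j h
      have : (⟨2 * i.1, (hpair i).1⟩ : Fin (2 * k)) ∈ pairFun j := by
        rw [← h, hmemPair]; left; rfl
      rw [hmemPair] at this
      have hi := i.2; have hj := j.2
      apply Fin.ext
      simp only at this
      omega
    have hcard : ∀ i : Fin k, (pairFun i).card = 2 := by
      intro i
      rw [hpairFun]
      rw [Finset.card_pair]
      simp [Fin.ext_iff]
    refine ⟨⟨Finset.univ.image pairFun, ?_, ?_, ?_⟩, rfl, ?_, ?_⟩
    · rw [Finset.supIndep_iff_pairwiseDisjoint]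
      intro q hq r hr hqr
      obtain ⟨i, -, rfl⟩ := Finset.mem_image.1 hq
      obtain ⟨j, -, rfl⟩ := Finset.mem_image.1 hr
      simp only [Function.onFun, id_eq]
      rw [Finset.disjoint_left]
      intro x hx hx'
      rw [hmemPair] at hx hx'
      have : i = j := Fin.ext (by omega)
      exact hqr (by rw [this])
    · apply Finset.ext
      intro x
      simp only [Finset.mem_sup, Finset.mem_univ, iff_true, id]
      have hx := x.2
      refine ⟨pairFun ⟨x.1 / 2, by omega⟩, Finset.mem_image.2 ⟨_, Finset.mem_univ _, rfl⟩, ?_⟩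
      rw [hmemPair]
      simp only
      omega
    · intro hbot
      obtain ⟨i, -, hi⟩ := Finset.mem_image.1 hbot
      have : (⟨2 * i.1, (hpair i).1⟩ : Fin (2 * k)) ∈ (⊥ : Finset (Fin (2 * k))) := by
        rw [← hi, hmemPair]; left; rfl
      simp at this
    · intro q hq
      obtain ⟨i, -, rfl⟩ := Finset.mem_image.1 hq
      intro u hu v hv huv
      rw [Finset.mem_coe, hmemPair] at hu hv
      have hu2 := u.2; have hv2 := v.2; have hi := i.2
      simp only [permGraphEvenOdd, SimpleGraph.fromRel_adj, Fin.lt_def, permPos]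
      refine ⟨huv, ?_⟩
      have hne : u.1 ≠ v.1 := fun e => huv (Fin.ext e)
      split_ifs <;> omega
    · rw [Finset.sum_image (fun i _ j _ h => hinj h)]
      simp only [hcard]
      simp
end
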